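/- arXiv:2506.04655 — 7 statements merged into one kernel-verified Lean document; each statement's English description precedes it below -/
import Mathlib

section
/- Let X and H be complex Hilbert spaces, let B : X → H be a bounded linear operator, and let K : H → H be a compact self-adjoint bounded linear operator. Then for every constant c > 0 there exists a finite-dimensional subspace V ⊆ X such that |⟨K(Bφ), Bφ⟩| ≤ c ‖Bφ‖² for all φ in the orthogonal complement V⊥ of V. -/
open scoped InnerProductSpace

/-- **Lemma 2.3 (abstract form).** Let `X`, `H` be complex Hilbert spaces, `B : X → H` a
bounded linear operator and `K : H → H` a compact self-adjoint bounded linear operator.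
Then for every `c > 0` there is a finite-dimensional subspace `V ⊆ X` such that
`|⟨K (B φ), B φ⟩| ≤ c ‖B φ‖²` for all `φ ∈ Vᗮ`. -/
theorem stmt_5 {X H : Type*}
    [NormedAddCommGroup X] [InnerProductSpace ℂ X] [CompleteSpace X]
    [NormedAddCommGroup H] [InnerProductSpace ℂ H] [CompleteSpace H]
    (B : X →L[ℂ] H)
    (K : H →L[ℂ] H) (hKc : IsCompactOperator K) (hKs : IsSelfAdjoint K) :
    ∀ c : ℝ, 0 < c → ∃ V : Submodule ℂ X, FiniteDimensional ℂ ↥V ∧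
      ∀ φ ∈ Vᗮ, ‖⟪K (B φ), B φ⟫_ℂ‖ ≤ c * ‖B φ‖ ^ 2 := by
  intro c hc
  by_contra hcon
  push_neg at hcon
  -- choice function on finite-dimensional subspaces
  have hsel : ∀ V : Submodule ℂ X, FiniteDimensional ℂ ↥V →
      ∃ φ, φ ∈ Vᗮ ∧ c * ‖B φ‖ ^ 2 < ‖⟪K (B φ), B φ⟫_ℂ‖ := by
    intro V hV
    obtain ⟨φ, hφ1, hφ2⟩ := hcon V hV
    exact ⟨φ, hφ1, hφ2⟩
  classical
  set h : Submodule ℂ X → X := fun V =>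
    if hV : FiniteDimensional ℂ ↥V then (hsel V hV).choose else 0 with hh
  -- the increasing sequence of finite-dimensional subspaces
  let Vs : ℕ → Submodule ℂ X := fun n =>
    Nat.rec (motive := fun _ => Submodule ℂ X) ⊥ (fun _ W => W ⊔ (ℂ ∙ (ContinuousLinearMap.adjoint B (B (h W))))) n
  have hVsucc : ∀ n, Vs (n + 1) = Vs n ⊔ (ℂ ∙ (ContinuousLinearMap.adjoint B (B (h (Vs n))))) :=
    fun n => rfl
  have hfin : ∀ n, FiniteDimensional ℂ ↥(Vs n) := by
    intro n
    induction n with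
    | zero =>
      have : Vs 0 = ⊥ := rfl
      rw [this]; infer_instance
    | succ n ih =>
      rw [hVsucc]
      have : FiniteDimensional ℂ ↥(ℂ ∙ (ContinuousLinearMap.adjoint B (B (h (Vs n))))) :=
        inferInstance
      exact Submodule.finiteDimensional_sup _ _
  have hmono : Monotone Vs := by
    apply monotone_nat_of_le_succ
    intro n
    rw [hVsucc]
    exact le_sup_left
  set φ : ℕ → X := fun n => h (Vs n) with hφdef
  have hφmem : ∀ n, φ n ∈ (Vs n)ᗮ ∧ c * ‖B (φ n)‖ ^ 2 < ‖⟪K (B (φ n)), B (φ n)⟫_ℂ‖ := by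
    intro n
    have : h (Vs n) = (hsel (Vs n) (hfin n)).choose := dif_pos (hfin n)
    rw [hφdef]
    simp only [this]
    exact (hsel (Vs n) (hfin n)).choose_spec
  -- B φ n ≠ 0
  have hBφ : ∀ n, B (φ n) ≠ 0 := by
    intro n hzero
    have := (hφmem n).2
    rw [hzero] at this
    simp at this
  -- orthogonality of B φ m and B φ n for m < n
  have horth : ∀ m n, m < n → ⟪B (φ m), B (φ n)⟫_ℂ = 0 := by
    intro m n hmn
    have hmem : ContinuousLinearMap.adjoint B (B (φ m)) ∈ Vs n := by
      have h1 : ContinuousLinearMap.adjoint B (B (φ m)) ∈ Vs (m + 1) := by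
        rw [hVsucc]
        exact Submodule.mem_sup_right (Submodule.mem_span_singleton_self _)
      exact hmono hmn h1
    have := ((hφmem n).1) _ hmem
    rwa [ContinuousLinearMap.adjoint_inner_left] at this
  -- normalized sequence
  set u : ℕ → H := fun n => ((‖B (φ n)‖ : ℂ))⁻¹ • B (φ n) with hu
  have hnorm_ne : ∀ n, ((‖B (φ n)‖ : ℂ)) ≠ 0 := by
    intro n
    simpa using norm_ne_zero_iff.mpr (hBφ n)
  have huon : Orthonormal ℂ u := by
    rw [orthonormal_iff_ite]
    intro i j
    by_cases hij : i = j
    · subst hij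
      simp only [hu, inner_smul_left, inner_smul_right, if_pos rfl]
      rw [inner_self_eq_norm_sq_to_K (𝕜 := ℂ)]
      rw [map_inv₀, Complex.conj_ofReal]
      have hne := hnorm_ne i
      field_simp
      simp
    · have hBorth : ⟪B (φ i), B (φ j)⟫_ℂ = 0 := by
        rcases lt_or_gt_of_ne hij with h' | h'
        · exact horth i j h'
        · have := horth j i h'
          rw [← inner_conj_symm, this, map_zero]
      simp only [hu, inner_smul_left, inner_smul_right, hBorth, mul_zero, if_neg hij]
  have hcu : ∀ n, c < ‖⟪K (u n), u n⟫_ℂ‖ := by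
    intro n
    have h2 := (hφmem n).2
    have hn : (0:ℝ) < ‖B (φ n)‖ := norm_pos_iff.mpr (hBφ n)
    have : ⟪K (u n), u n⟫_ℂ = ((‖B (φ n)‖ : ℂ))⁻¹ * (starRingEnd ℂ (((‖B (φ n)‖ : ℂ))⁻¹)) *
        ⟪K (B (φ n)), B (φ n)⟫_ℂ := by
      simp only [hu, map_smul, inner_smul_left, inner_smul_right]
      ring
    rw [this]
    have hne : ‖B (φ n)‖ ≠ 0 := hn.ne'
    have heq : ‖(↑‖B (φ n)‖ : ℂ)⁻¹ * (starRingEnd ℂ) (↑‖B (φ n)‖ : ℂ)⁻¹ *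
        ⟪K (B (φ n)), B (φ n)⟫_ℂ‖ = ‖⟪K (B (φ n)), B (φ n)⟫_ℂ‖ / ‖B (φ n)‖ ^ 2 := by
      simp only [map_inv₀, Complex.conj_ofReal, norm_mul, norm_inv, Complex.norm_real,
        Real.norm_eq_abs, abs_of_pos hn]
      rw [div_eq_mul_inv, pow_two, mul_inv]
      ring
    rw [heq, lt_div_iff₀ (by positivity)]
    linarith
  -- compactness: extract convergent subsequence of K (u n)
  have hball : ∀ n, u n ∈ Metric.closedBall (0 : H) 1 := by
    intro n
    have : ‖u n‖ = 1 := huon.1 n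
    simp [Metric.mem_closedBall, dist_zero_right, this]
  obtain ⟨S, hScomp, hSsub⟩ :=
    hKc.image_subset_compact_of_bounded (𝕜₁ := ℂ) (f := (K : H →ₗ[ℂ] H))
      (Metric.isBounded_closedBall (x := (0:H)) (r := 1))
  have hKu : ∀ n, K (u n) ∈ S := fun n => hSsub ⟨u n, hball n, rfl⟩
  obtain ⟨v, hvS, ψ, hψmono, hψlim⟩ := hScomp.tendsto_subseq (x := fun n => K (u n)) hKu
  -- Bessel: inner products with v tend to 0
  have hbessel : Filter.Tendsto (fun n => ‖⟪v, u n⟫_ℂ‖) Filter.atTop (nhds 0) := by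
    have hsum : Summable fun n => ‖⟪u n, v⟫_ℂ‖ ^ 2 := huon.inner_products_summable v
    have h0 : Filter.Tendsto (fun n => ‖⟪u n, v⟫_ℂ‖ ^ 2) Filter.atTop (nhds 0) :=
      hsum.tendsto_atTop_zero
    have h1 : Filter.Tendsto (fun n => ‖⟪u n, v⟫_ℂ‖) Filter.atTop (nhds 0) := by
      have := h0.sqrt
      simp only [Real.sqrt_zero] at this
      convert this using 2 with n
      rw [Real.sqrt_sq (norm_nonneg _)]
    convert h1 using 2 with n
    rw [← inner_conj_symm, RCLike.norm_conj]
  -- the contradiction: along the subsequence, ‖⟪K u, u⟫‖ → 0 but each is > c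
  have hKulim : Filter.Tendsto (fun k => ‖K (u (ψ k)) - v‖) Filter.atTop (nhds 0) := by
    rw [← tendsto_iff_norm_sub_tendsto_zero] at *
    exact hψlim
  have hvulim : Filter.Tendsto (fun k => ‖⟪v, u (ψ k)⟫_ℂ‖) Filter.atTop (nhds 0) :=
    hbessel.comp (hψmono.tendsto_atTop)
  have hbig : Filter.Tendsto (fun k => ‖K (u (ψ k)) - v‖ + ‖⟪v, u (ψ k)⟫_ℂ‖)
      Filter.atTop (nhds 0) := by
    have := hKulim.add hvulim
    simpa using this
  have hle : ∀ k, c ≤ ‖K (u (ψ k)) - v‖ + ‖⟪v, u (ψ k)⟫_ℂ‖ := by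
    intro k
    have h1 : ⟪K (u (ψ k)), u (ψ k)⟫_ℂ = ⟪K (u (ψ k)) - v, u (ψ k)⟫_ℂ + ⟪v, u (ψ k)⟫_ℂ := by
      rw [← inner_add_left]; congr 1; abel
    have h2 : ‖⟪K (u (ψ k)), u (ψ k)⟫_ℂ‖ ≤ ‖K (u (ψ k)) - v‖ + ‖⟪v, u (ψ k)⟫_ℂ‖ := by
      rw [h1]
      refine (norm_add_le _ _).trans (add_le_add ?_ le_rfl)
      calc ‖⟪K (u (ψ k)) - v, u (ψ k)⟫_ℂ‖ ≤ ‖K (u (ψ k)) - v‖ * ‖u (ψ k)‖ := norm_inner_le_norm _ _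
      _ = ‖K (u (ψ k)) - v‖ := by rw [huon.1 (ψ k), mul_one]
    exact le_trans (le_of_lt (hcu (ψ k))) h2
  have : c ≤ 0 := le_of_tendsto_of_tendsto' tendsto_const_nhds hbig hle
  linarith
end

section
/- Let X, Y, Z be complex Hilbert spaces, let A : X → Y and B : X → Z be bounded linear operators, let V ⊆ X be a finite-dimensional subspace, and let P : X → X be the orthogonal projection onto V. Then the following are equivalent: (1) there exists a constant C > 0 such that ‖A g‖² ≤ C² (‖B g‖² + ‖P g‖²) for all g ∈ X; (2) range(A*) ⊆ range(B*) + V. -/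
set_option maxHeartbeats 1000000


open ContinuousLinearMap

open scoped ComplexInnerProductSpace

/-- Let `X`, `Y`, `Z` be complex Hilbert spaces, `A : X → Y`, `B : X → Z` bounded linear
operators, `V ⊆ X` a finite-dimensional subspace and `P` the orthogonal projection onto
`V`.  Then there is a constant `C > 0` with `‖A g‖² ≤ C² (‖B g‖² + ‖P g‖²)` for all `g`
iff `range (A*) ⊆ range (B*) + V`. -/
theorem stmt_6 {X Y Z : Type*}
    [NormedAddCommGroup X] [InnerProductSpace ℂ X] [CompleteSpace X]
    [NormedAddCommGroup Y] [InnerProductSpace ℂ Y] [CompleteSpace Y]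
    [NormedAddCommGroup Z] [InnerProductSpace ℂ Z] [CompleteSpace Z]
    (A : X →L[ℂ] Y) (B : X →L[ℂ] Z)
    (V : Submodule ℂ X) [FiniteDimensional ℂ ↥V] :
    (∃ C : ℝ, 0 < C ∧ ∀ g : X,
        ‖A g‖ ^ 2 ≤ C ^ 2 * (‖B g‖ ^ 2 + ‖(Submodule.orthogonalProjectionOnto V g : X)‖ ^ 2)) ↔
      LinearMap.range (adjoint A : Y →ₗ[ℂ] X) ≤ LinearMap.range (adjoint B : Z →ₗ[ℂ] X) ⊔ V := by
  classical
  set P : X →L[ℂ] X := V.subtypeL ∘L Submodule.orthogonalProjectionOnto V with hPdef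
  have hPg : ∀ g : X, P g = (Submodule.orthogonalProjectionOnto V g : X) := fun g => rfl
  have hPself : ContinuousLinearMap.adjoint P = P :=
    (isSelfAdjoint_starProjection V).adjoint_eq
  let W := WithLp 2 (Z × X)
  let e : W ≃L[ℂ] Z × X := WithLp.prodContinuousLinearEquiv 2 ℂ Z X
  let D : X →L[ℂ] W := (e.symm : (Z × X) →L[ℂ] W) ∘L (B.prod P)
  have hDfst : ∀ g : X, (D g).fst = B g := fun g => rfl
  have hDsnd : ∀ g : X, (D g).snd = P g := fun g => rfl
  have hD2 : ∀ g : X, ‖D g‖ ^ 2 = ‖B g‖ ^ 2 + ‖(Submodule.orthogonalProjectionOnto V g : X)‖ ^ 2 := by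
    intro g
    rw [WithLp.prod_norm_sq_eq_of_L2, hDfst, hDsnd, hPg]
  have hDadj : ∀ w : W, adjoint D w = adjoint B w.fst + P w.snd := by
    intro w
    refine ext_inner_right ℂ fun g => ?_
    rw [adjoint_inner_left]
    have : ⟪w, D g⟫ = ⟪w.fst, B g⟫ + ⟪w.snd, P g⟫ := by
      rw [WithLp.prod_inner_apply]; rfl
    rw [this, inner_add_left, ← adjoint_inner_left B, ← adjoint_inner_left P, hPself]
  constructor
  · rintro ⟨C, hC, hineq⟩ x ⟨y, rfl⟩
    have hAD : ∀ g : X, ‖A g‖ ≤ C * ‖D g‖ := by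
      intro g
      have h2 : ‖A g‖ ^ 2 ≤ (C * ‖D g‖) ^ 2 := by
        rw [mul_pow, hD2 g]; exact hineq g
      nlinarith [norm_nonneg (A g), norm_nonneg (D g), hC.le,
        mul_nonneg hC.le (norm_nonneg (D g))]
    have hwd : ∀ g g' : X, D g = D g' → ⟪y, A g⟫ = ⟪y, A g'⟫ := by
      intro g g' hgg'
      have h1 : ‖A g - A g'‖ ≤ C * ‖D g - D g'‖ := by
        rw [← map_sub, ← map_sub]; exact hAD _
      rw [hgg', sub_self, norm_zero, mul_zero] at h1
      have h2 : A g = A g' := by rwa [← sub_eq_zero, ← norm_le_zero_iff]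
      rw [h2]
    set p : Submodule ℂ W := LinearMap.range (D : X →ₗ[ℂ] W) with hp
    let sel : p → X := fun w => (LinearMap.mem_range.mp w.2).choose
    have hsel : ∀ w : p, D (sel w) = (w : W) := fun w => (LinearMap.mem_range.mp w.2).choose_spec
    let f₀ : p →ₗ[ℂ] ℂ :=
      { toFun := fun w => ⟪y, A (sel w)⟫
        map_add' := by
          intro w w'
          show ⟪y, A (sel (w + w'))⟫ = ⟪y, A (sel w)⟫ + ⟪y, A (sel w')⟫
          have h1 : D (sel (w + w')) = D (sel w + sel w') := by
            rw [map_add, hsel, hsel, hsel, Submodule.coe_add]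
          rw [hwd _ _ h1, map_add, inner_add_right]
        map_smul' := by
          intro c w
          show ⟪y, A (sel (c • w))⟫ = (RingHom.id ℂ) c * ⟪y, A (sel w)⟫
          have h1 : D (sel (c • w)) = D (c • sel w) := by
            rw [map_smul, hsel, hsel, Submodule.coe_smul]
          rw [hwd _ _ h1, map_smul, inner_smul_right]
          rfl }
    have hbound : ∀ w : p, ‖f₀ w‖ ≤ (C * ‖y‖) * ‖w‖ := by
      intro w
      have hcoe : ‖(w : W)‖ = ‖w‖ := rfl
      calc ‖⟪y, A (sel w)⟫‖ ≤ ‖y‖ * ‖A (sel w)‖ := norm_inner_le_norm _ _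
        _ ≤ ‖y‖ * (C * ‖D (sel w)‖) :=
            mul_le_mul_of_nonneg_left (hAD _) (norm_nonneg y)
        _ = (C * ‖y‖) * ‖w‖ := by rw [hsel, hcoe]; ring
    let f : p →L[ℂ] ℂ := f₀.mkContinuous (C * ‖y‖) hbound
    obtain ⟨Φ, hΦ, -⟩ := exists_extension_norm_eq p f
    set z := (InnerProductSpace.toDual ℂ W).symm Φ with hz
    have hzw : ∀ w : W, ⟪z, w⟫ = Φ w := fun w => InnerProductSpace.toDual_symm_apply
    have hkey : adjoint D z = adjoint A y := by
      refine ext_inner_right ℂ fun g => ?_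
      rw [adjoint_inner_left, adjoint_inner_left, hzw]
      have hmem : D g ∈ p := LinearMap.mem_range_self (D : X →ₗ[ℂ] W) g
      rw [show (D g) = ((⟨D g, hmem⟩ : p) : W) from rfl, hΦ]
      exact hwd _ _ (hsel ⟨D g, hmem⟩)
    rw [show (adjoint A : Y →ₗ[ℂ] X) y = adjoint A y from rfl, ← hkey, hDadj]
    exact Submodule.add_mem_sup (LinearMap.mem_range_self (adjoint B : Z →ₗ[ℂ] X) _)
      (by rw [hPg]; exact Submodule.coe_mem _)
  · intro h
    have hsolv : ∀ y : Y, ∃ w : W, adjoint D w = adjoint A y := by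
      intro y
      have hy : adjoint A y ∈ LinearMap.range (adjoint B : Z →ₗ[ℂ] X) ⊔ V :=
        h (LinearMap.mem_range_self (adjoint A : Y →ₗ[ℂ] X) y)
      obtain ⟨b, hb, v, hv, hbv⟩ := Submodule.mem_sup.mp hy
      obtain ⟨zz, rfl⟩ := hb
      refine ⟨(e.symm (zz, v) : W), ?_⟩
      rw [hDadj]
      have h1 : ((e.symm (zz, v) : W)).fst = zz := rfl
      have h2 : ((e.symm (zz, v) : W)).snd = v := rfl
      rw [h1, h2, show P v = v from by rw [hPg]; exact Submodule.starProjection_eq_self_iff.mpr hv]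
      exact hbv
    set N : Submodule ℂ W := LinearMap.ker (adjoint D : W →ₗ[ℂ] X) with hN
    have hNc : IsClosed (N : Set W) := ContinuousLinearMap.isClosed_ker _
    haveI : CompleteSpace N := hNc.completeSpace_coe
    have huniq : ∀ u u' : W, u ∈ Nᗮ → u' ∈ Nᗮ → adjoint D u = adjoint D u' → u = u' := by
      intro u u' hu hu' heq
      have hker : u - u' ∈ N := by
        rw [hN, LinearMap.mem_ker, ContinuousLinearMap.coe_coe, map_sub, heq, sub_self]
      have horth : u - u' ∈ Nᗮ := Submodule.sub_mem _ hu hu'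
      have h0 : ⟪u - u', u - u'⟫ = 0 := (Submodule.mem_orthogonal _ _).mp horth _ hker
      exact sub_eq_zero.mp (inner_self_eq_zero.mp h0)
    let T : Y → W := fun y => (hsolv y).choose - (Submodule.orthogonalProjectionOnto N (hsolv y).choose : W)
    have hTorth : ∀ y, T y ∈ Nᗮ := fun y => N.sub_starProjection_mem_orthogonal _
    have hTD : ∀ y, adjoint D (T y) = adjoint A y := by
      intro y
      have hm : adjoint D ((Submodule.orthogonalProjectionOnto N (hsolv y).choose : W)) = 0 :=
        Submodule.coe_mem (Submodule.orthogonalProjectionOnto N (hsolv y).choose)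
      show adjoint D ((hsolv y).choose - _) = adjoint A y
      rw [map_sub, hm, sub_zero, (hsolv y).choose_spec]
    let Tl : Y →ₗ[ℂ] W :=
      { toFun := T
        map_add' := fun y y' =>
          huniq _ _ (hTorth _) (Submodule.add_mem _ (hTorth y) (hTorth y'))
            (by simp only [map_add, hTD])
        map_smul' := fun c y =>
          huniq _ _ (hTorth _) (Submodule.smul_mem _ c (hTorth y))
            (by simp only [map_smul, hTD, RingHom.id_apply]) }
    have hTl : ∀ y, Tl y = T y := fun y => rfl
    have hTcont : Continuous Tl := by
      apply LinearMap.continuous_of_seq_closed_graph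
      intro u x y' hux hTy
      have hy'N : y' ∈ Nᗮ :=
        N.isClosed_orthogonal.mem_of_tendsto hTy
          (Filter.Eventually.of_forall fun n => hTorth (u n))
      have h1 : Filter.Tendsto (fun n => adjoint D (Tl (u n))) Filter.atTop
          (nhds (adjoint D y')) := ((adjoint D).continuous.tendsto _).comp hTy
      have h2 : Filter.Tendsto (fun n => adjoint A (u n)) Filter.atTop
          (nhds (adjoint A x)) := ((adjoint A).continuous.tendsto _).comp hux
      have h3 : adjoint D y' = adjoint A x := by
        refine tendsto_nhds_unique ?_ h2
        have : (fun n => adjoint D (Tl (u n))) = fun n => adjoint A (u n) := by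
          funext n; rw [hTl, hTD]
        rwa [this] at h1
      exact huniq y' (Tl x) hy'N (by rw [hTl]; exact hTorth x)
        (by rw [h3, hTl, hTD])
    let Tc : Y →L[ℂ] W := ⟨Tl, hTcont⟩
    refine ⟨‖Tc‖ + 1, by positivity, fun g => ?_⟩
    have hCpos : (0:ℝ) < ‖Tc‖ + 1 := by positivity
    have hTc : ∀ y, Tc y = T y := fun y => rfl
    have hinner : (⟪A g, A g⟫ : ℂ) = ⟪Tc (A g), D g⟫ := by
      rw [← adjoint_inner_left A, ← adjoint_inner_left D, hTc, hTD]
    have key : ‖A g‖ ^ 2 ≤ ((‖Tc‖ + 1) * ‖A g‖) * ‖D g‖ := by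
      calc ‖A g‖ ^ 2 = RCLike.re (⟪A g, A g⟫ : ℂ) := (inner_self_eq_norm_sq _).symm
        _ = RCLike.re (⟪Tc (A g), D g⟫ : ℂ) := by rw [hinner]
        _ ≤ ‖(⟪Tc (A g), D g⟫ : ℂ)‖ := RCLike.re_le_norm _
        _ ≤ ‖Tc (A g)‖ * ‖D g‖ := norm_inner_le_norm _ _
        _ ≤ (‖Tc‖ * ‖A g‖) * ‖D g‖ :=
            mul_le_mul_of_nonneg_right (Tc.le_opNorm _) (norm_nonneg _)
        _ ≤ ((‖Tc‖ + 1) * ‖A g‖) * ‖D g‖ := by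
            have := norm_nonneg (A g); have := norm_nonneg (D g); nlinarith
    have hgoal : ‖A g‖ ^ 2 ≤ (‖Tc‖ + 1) ^ 2 * ‖D g‖ ^ 2 := by
      rcases eq_or_lt_of_le (norm_nonneg (A g)) with h0 | h0
      · rw [← h0, zero_pow (by norm_num : 2 ≠ 0)]; positivity
      · have ha : ‖A g‖ ≤ (‖Tc‖ + 1) * ‖D g‖ := by nlinarith
        nlinarith [norm_nonneg (D g), mul_nonneg (mul_nonneg hCpos.le (norm_nonneg (D g)))
          (sub_nonneg.mpr ha)]
    calc ‖A g‖ ^ 2 ≤ (‖Tc‖ + 1) ^ 2 * ‖D g‖ ^ 2 := hgoal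
      _ = (‖Tc‖ + 1) ^ 2 * (‖B g‖ ^ 2 + ‖(Submodule.orthogonalProjectionOnto V g : X)‖ ^ 2) := by
          rw [hD2]
end

section
/- Let X, Y, Z be complex Hilbert spaces and let A : X → Y and B : X → Z be bounded linear operators such that range(A*) is infinite-dimensional and range(A*) ∩ range(B*) = {0}. Let V ⊆ X be a finite-dimensional subspace with orthogonal projection P : X → X onto V. Then for every constant C > 0 there exists g ∈ X with ‖A g‖² > C² (‖B g‖² + ‖P g‖²). -/
open ContinuousLinearMap

lemma douglas_functional {X Z : Type*}
    [NormedAddCommGroup X] [InnerProductSpace ℂ X] [CompleteSpace X]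
    [NormedAddCommGroup Z] [InnerProductSpace ℂ Z] [CompleteSpace Z]
    (S : X →L[ℂ] Z) (x : X) (c : ℝ)
    (h : ∀ g : X, ‖(inner ℂ x g : ℂ)‖ ≤ c * ‖S g‖) :
    x ∈ LinearMap.range (adjoint S : Z →ₗ[ℂ] X) := by
  have hker : ∀ g g' : X, S g = S g' → (inner ℂ x g : ℂ) = inner ℂ x g' := by
    intro g g' hgg'
    have h0 : ‖(inner ℂ x (g - g') : ℂ)‖ ≤ c * ‖S (g - g')‖ := h _
    rw [map_sub, hgg', sub_self, norm_zero, mul_zero] at h0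
    have h1 : (inner ℂ x (g - g') : ℂ) = 0 := norm_le_zero_iff.mp h0
    rw [inner_sub_right] at h1
    exact sub_eq_zero.mp h1
  set p : Submodule ℂ Z := LinearMap.range (S : X →ₗ[ℂ] Z) with hp
  have key : ∀ (w : ↥p) (g : X), S g = (w : Z) → (inner ℂ x w.2.choose : ℂ) = inner ℂ x g := by
    intro w g hg
    exact hker _ _ (w.2.choose_spec.trans hg.symm)
  have hcs : ∀ w : ↥p, S w.2.choose = (w : Z) := fun w => w.2.choose_spec
  let l : ↥p →ₗ[ℂ] ℂ :=
    { toFun := fun w => (inner ℂ x w.2.choose : ℂ)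
      map_add' := by
        intro w w'
        beta_reduce
        rw [key (w + w') (w.2.choose + w'.2.choose)
            (by rw [map_add, hcs w, hcs w']; rfl),
          inner_add_right]
      map_smul' := by
        intro a w
        beta_reduce
        rw [key (a • w) (a • w.2.choose)
            (by rw [map_smul, hcs w]; rfl),
          inner_smul_right]
        rfl }
  have hl : ∀ (w : ↥p), ‖l w‖ ≤ c * ‖w‖ := by
    intro w
    have := h w.2.choose
    rwa [hcs w] at this
  let lc : ↥p →L[ℂ] ℂ := l.mkContinuous c hl
  obtain ⟨F, hF, -⟩ := exists_extension_norm_eq p lc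
  refine ⟨(InnerProductSpace.toDual ℂ Z).symm F, ?_⟩
  apply ext_inner_right ℂ
  intro g
  rw [ContinuousLinearMap.coe_coe]
  rw [adjoint_inner_left]
  rw [InnerProductSpace.toDual_symm_apply]
  have : F (S g) = lc ⟨S g, ⟨g, rfl⟩⟩ := hF ⟨S g, ⟨g, rfl⟩⟩
  rw [this]
  exact key ⟨S g, ⟨g, rfl⟩⟩ g rfl


/-- Key intermediate inequality in the proof of Theorem 3.4.  Let `A : X → Y`,
`B : X → Z` be bounded linear operators between complex Hilbert spaces with
`range (A*)` infinite-dimensional and `range (A*) ∩ range (B*) = {0}`, let `V ⊆ X` be a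
finite-dimensional subspace with orthogonal projection `P` onto `V`.  Then for every
`C > 0` there exists `g ∈ X` with `‖A g‖² > C² (‖B g‖² + ‖P g‖²)`. -/
theorem stmt_7 {X Y Z : Type*}
    [NormedAddCommGroup X] [InnerProductSpace ℂ X] [CompleteSpace X]
    [NormedAddCommGroup Y] [InnerProductSpace ℂ Y] [CompleteSpace Y]
    [NormedAddCommGroup Z] [InnerProductSpace ℂ Z] [CompleteSpace Z]
    (A : X →L[ℂ] Y) (B : X →L[ℂ] Z)
    (hinf : ¬ FiniteDimensional ℂ ↥(LinearMap.range (adjoint A : Y →ₗ[ℂ] X)))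
    (hint : LinearMap.range (adjoint A : Y →ₗ[ℂ] X) ⊓ LinearMap.range (adjoint B : Z →ₗ[ℂ] X) = ⊥)
    (V : Submodule ℂ X) [FiniteDimensional ℂ ↥V] :
    ∀ C : ℝ, 0 < C → ∃ g : X,
      C ^ 2 * (‖B g‖ ^ 2 + ‖(V.orthogonalProjectionOnto g : X)‖ ^ 2) < ‖A g‖ ^ 2 := by
  intro C hC
  by_contra hcon
  push_neg at hcon
  -- hcon : ∀ g, ‖A g‖ ^ 2 ≤ C ^ 2 * (‖B g‖ ^ 2 + ‖P g‖ ^ 2)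
  apply hinf
  set P : X →L[ℂ] X := V.subtypeL ∘L V.orthogonalProjectionOnto with hPdef
  set Q : X →L[ℂ] X := ContinuousLinearMap.id ℂ X - P with hQdef
  have hPapp : ∀ g : X, P g = (V.orthogonalProjectionOnto g : X) := fun g => rfl
  have hPP : ∀ g : X, P (P g) = P g := by
    intro g
    simp only [hPapp, Submodule.orthogonalProjectionOnto_mem_subspace_eq_self]
  have hPQ : ∀ g : X, P (Q g) = 0 := by
    intro g
    simp only [hQdef, ContinuousLinearMap.sub_apply, ContinuousLinearMap.id_apply,
      map_sub, hPP, sub_self]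
  have hPadj : adjoint P = P := by
    ext u
    apply ext_inner_right ℂ
    intro v
    rw [adjoint_inner_left]
    simp only [hPapp]
    exact (Submodule.inner_starProjection_left_eq_right V u v).symm
  have hQadj : adjoint Q = Q := by
    rw [hQdef, map_sub, adjoint_id, hPadj]
  have hPmem : ∀ g : X, P g ∈ V := fun g => (V.orthogonalProjectionOnto g).2
  -- Step 1 : range A* ≤ range B* ⊔ V
  have hsub : ∀ x ∈ LinearMap.range (adjoint A : Y →ₗ[ℂ] X),
      x ∈ LinearMap.range (adjoint B : Z →ₗ[ℂ] X) ⊔ V := by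
    rintro x ⟨y, rfl⟩
    set x := adjoint A y with hx
    have hbound : ∀ g : X, ‖(inner ℂ (Q x) g : ℂ)‖ ≤ (‖y‖ * C) * ‖(B ∘L Q) g‖ := by
      intro g
      have h1 : (inner ℂ (Q x) g : ℂ) = inner ℂ y (A (Q g)) := by
        conv_lhs => rw [← hQadj]
        rw [adjoint_inner_left, hx, adjoint_inner_left]
      rw [h1, ContinuousLinearMap.comp_apply]
      have h2 : ‖A (Q g)‖ ≤ C * ‖B (Q g)‖ := by
        have h3 := hcon (Q g)
        rw [← hPapp, hPQ, norm_zero] at h3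
        have h4 : ‖A (Q g)‖ ^ 2 ≤ (C * ‖B (Q g)‖) ^ 2 := by
          rw [mul_pow]; nlinarith [h3]
        exact (pow_le_pow_iff_left₀ (norm_nonneg _) (by positivity) two_ne_zero).mp h4
      calc ‖(inner ℂ y (A (Q g)) : ℂ)‖ ≤ ‖y‖ * ‖A (Q g)‖ := norm_inner_le_norm _ _
        _ ≤ ‖y‖ * (C * ‖B (Q g)‖) := by
            exact mul_le_mul_of_nonneg_left h2 (norm_nonneg y)
        _ = (‖y‖ * C) * ‖B (Q g)‖ := by ring
    obtain ⟨z, hz⟩ := douglas_functional (B ∘L Q) (Q x) (‖y‖ * C) hbound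
    rw [adjoint_comp, hQadj] at hz
    -- hz : Q (adjoint B z) = Q x
    have hz' : adjoint B z - P (adjoint B z) = x - P x := by
      simpa [hQdef, ContinuousLinearMap.sub_apply] using hz
    have hxeq : x = adjoint B z + (P x - P (adjoint B z)) := by
      have h5 : x = (adjoint B z - P (adjoint B z)) + P x :=
        sub_eq_iff_eq_add.mp hz'.symm
      conv_lhs => rw [h5]
      abel
    change x ∈ _
    rw [hxeq]
    exact Submodule.add_mem_sup ⟨z, rfl⟩ (Submodule.sub_mem V (hPmem x) (hPmem _))
  -- Step 2 : embed range A* into a finite-dimensional space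
  set q := (LinearMap.range (adjoint B : Z →ₗ[ℂ] X)).mkQ with hq
  let φ : ↥(LinearMap.range (adjoint A : Y →ₗ[ℂ] X)) →ₗ[ℂ] X ⧸ LinearMap.range (adjoint B : Z →ₗ[ℂ] X) :=
    q.comp (LinearMap.range (adjoint A : Y →ₗ[ℂ] X)).subtype
  have hφrange : ∀ w : ↥(LinearMap.range (adjoint A : Y →ₗ[ℂ] X)), φ w ∈ Submodule.map q V := by
    intro w
    obtain ⟨b, hb, v, hv, hbv⟩ := Submodule.mem_sup.mp (hsub w.1 w.2)
    have : φ w = q v := by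
      have : q b = 0 := (Submodule.Quotient.mk_eq_zero _).mpr hb
      show q w.1 = q v
      rw [← hbv, map_add, this, zero_add]
    rw [this]
    exact Submodule.mem_map_of_mem hv
  let ψ : ↥(LinearMap.range (adjoint A : Y →ₗ[ℂ] X)) →ₗ[ℂ] ↥(Submodule.map q V) :=
    φ.codRestrict _ hφrange
  have hψinj : Function.Injective ψ := by
    intro a b hab
    have h1 : φ a = φ b := congrArg Subtype.val hab
    have h2 : q (a.1 - b.1) = 0 := by
      rw [map_sub]
      exact sub_eq_zero.mpr h1
    have h3 : (a.1 - b.1) ∈ LinearMap.range (adjoint B : Z →ₗ[ℂ] X) :=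
      (Submodule.Quotient.mk_eq_zero _).mp h2
    have h4 : (a.1 - b.1) ∈ LinearMap.range (adjoint A : Y →ₗ[ℂ] X) ⊓ LinearMap.range (adjoint B : Z →ₗ[ℂ] X) :=
      ⟨Submodule.sub_mem _ a.2 b.2, h3⟩
    rw [hint] at h4
    exact Subtype.ext (sub_eq_zero.mp h4)
  haveI : FiniteDimensional ℂ ↥(Submodule.map q V) := by
    infer_instance
  exact FiniteDimensional.of_injective ψ hψinj
end

section
/- Let X, Y, Z be complex Hilbert spaces and let A : X → Y and B : X → Z be bounded linear operators such that range(A*) is infinite-dimensional and range(A*) ∩ range(B*) = {0}. Then for every finite-dimensional subspace V ⊆ X there exists a sequence (h_n) of elements of the orthogonal complement V⊥ such that ‖A h_n‖ → ∞ and ‖B h_n‖ → 0 as n → ∞. -/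
open ContinuousLinearMap Filter

/-- Douglas-type range inclusion: if `‖T x‖ ≤ C * ‖S x‖` for all `x`, then
`range T* ⊆ range S*`. -/
lemma douglas_range_le {X Y Z : Type*}
    [NormedAddCommGroup X] [InnerProductSpace ℂ X] [CompleteSpace X]
    [NormedAddCommGroup Y] [InnerProductSpace ℂ Y] [CompleteSpace Y]
    [NormedAddCommGroup Z] [InnerProductSpace ℂ Z] [CompleteSpace Z]
    (T : X →L[ℂ] Y) (S : X →L[ℂ] Z) (C : ℝ)
    (h : ∀ x, ‖T x‖ ≤ C * ‖S x‖) :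
    LinearMap.range (adjoint T : Y →ₗ[ℂ] X) ≤ LinearMap.range (adjoint S : Z →ₗ[ℂ] X) := by
  rintro _ ⟨u, rfl⟩
  -- the functional `x ↦ ⟪u, T x⟫`
  set L : X →L[ℂ] ℂ := (innerSL ℂ u).comp T with hLdef
  have hLval : ∀ x, L x = inner ℂ u (T x) := fun x => rfl
  set Sₗ : X →ₗ[ℂ] Z := (S : X →ₗ[ℂ] Z) with hSl
  have hker : LinearMap.ker Sₗ ≤ LinearMap.ker (L : X →ₗ[ℂ] ℂ) := by
    intro x hx
    have hx' : S x = 0 := hx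
    have hTx : ‖T x‖ ≤ 0 := by simpa [hx'] using h x
    have hT0 : T x = 0 := norm_le_zero_iff.mp hTx
    show L x = 0
    simp [hLval, hT0]
  set e := Sₗ.quotKerEquivRange with he
  set f : LinearMap.range Sₗ →ₗ[ℂ] ℂ :=
    ((LinearMap.ker Sₗ).liftQ (L : X →ₗ[ℂ] ℂ) hker).comp (e.symm : LinearMap.range Sₗ →ₗ[ℂ] (X ⧸ LinearMap.ker Sₗ)) with hf
  have hfval : ∀ (x : X) (hm : S x ∈ LinearMap.range Sₗ), f ⟨S x, hm⟩ = L x := by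
    intro x hm
    have h1 : e (Submodule.Quotient.mk x) = ⟨S x, hm⟩ := by
      apply Subtype.ext
      exact Sₗ.quotKerEquivRange_apply_mk x
    have h2 : e.symm ⟨S x, hm⟩ = Submodule.Quotient.mk x := by
      rw [LinearEquiv.symm_apply_eq, h1]
    simp [hf, h2]
  have hbound : ∀ m : LinearMap.range Sₗ, ‖f m‖ ≤ (max C 0 * ‖u‖) * ‖m‖ := by
    rintro ⟨m, hm⟩
    obtain ⟨x, hx⟩ := hm
    have hx' : S x = m := hx
    subst hx'
    rw [hfval x ⟨x, rfl⟩]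
    have h1 : ‖L x‖ ≤ ‖u‖ * ‖T x‖ := by
      rw [hLval]
      exact norm_inner_le_norm u (T x)
    have h2 : ‖T x‖ ≤ max C 0 * ‖S x‖ :=
      le_trans (h x) (mul_le_mul_of_nonneg_right (le_max_left _ _) (norm_nonneg _))
    have hnm : ‖(⟨S x, ⟨x, rfl⟩⟩ : LinearMap.range Sₗ)‖ = ‖S x‖ := rfl
    rw [hnm]
    calc ‖L x‖ ≤ ‖u‖ * ‖T x‖ := h1
      _ ≤ ‖u‖ * (max C 0 * ‖S x‖) :=
          mul_le_mul_of_nonneg_left h2 (norm_nonneg _)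
      _ = (max C 0 * ‖u‖) * ‖S x‖ := by ring
  set fC : LinearMap.range Sₗ →L[ℂ] ℂ := LinearMap.mkContinuous f (max C 0 * ‖u‖) hbound with hfC
  obtain ⟨g, hg, -⟩ := exists_extension_norm_eq (LinearMap.range Sₗ) fC
  set z := (InnerProductSpace.toDual ℂ Z).symm g with hz
  have hzval : ∀ w, (inner ℂ z w : ℂ) = g w := fun w =>
    InnerProductSpace.toDual_symm_apply
  refine ⟨z, ?_⟩
  apply ext_inner_right ℂ
  intro x
  change inner ℂ (adjoint S z) x = inner ℂ (adjoint T u) x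
  rw [adjoint_inner_left, adjoint_inner_left, hzval]
  have : g (S x) = fC ⟨S x, ⟨x, rfl⟩⟩ := hg ⟨S x, ⟨x, rfl⟩⟩
  rw [this]
  have : fC (⟨S x, ⟨x, rfl⟩⟩ : LinearMap.range Sₗ) = f ⟨S x, ⟨x, rfl⟩⟩ := rfl
  rw [this, hfval x ⟨x, rfl⟩, hLval]

/-- **Theorem 3.4 (abstract form), existence of localized wave functions.**  Let
`A : X → Y`, `B : X → Z` be bounded linear operators between complex Hilbert spaces with
`range (A*)` infinite-dimensional and `range (A*) ∩ range (B*) = {0}`.  Then for every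
finite-dimensional subspace `V ⊆ X` there is a sequence `(h n)` in `Vᗮ` with
`‖A (h n)‖ → ∞` and `‖B (h n)‖ → 0`. -/
theorem stmt_8 {X Y Z : Type*}
    [NormedAddCommGroup X] [InnerProductSpace ℂ X] [CompleteSpace X]
    [NormedAddCommGroup Y] [InnerProductSpace ℂ Y] [CompleteSpace Y]
    [NormedAddCommGroup Z] [InnerProductSpace ℂ Z] [CompleteSpace Z]
    (A : X →L[ℂ] Y) (B : X →L[ℂ] Z)
    (hinf : ¬ FiniteDimensional ℂ ↥(LinearMap.range (adjoint A : Y →ₗ[ℂ] X)))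
    (hint : LinearMap.range (adjoint A : Y →ₗ[ℂ] X) ⊓ LinearMap.range (adjoint B : Z →ₗ[ℂ] X) = ⊥) :
    ∀ V : Submodule ℂ X, FiniteDimensional ℂ ↥V →
      ∃ h : ℕ → X, (∀ n, h n ∈ Vᗮ) ∧
        Tendsto (fun n => ‖A (h n)‖) atTop atTop ∧
        Tendsto (fun n => ‖B (h n)‖) atTop (nhds 0) := by
  intro V hV
  haveI := hV
  haveI : CompleteSpace V := FiniteDimensional.complete ℂ V
  haveI : CompleteSpace (↥Vᗮ) := (Submodule.isClosed_orthogonal V).completeSpace_coe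
  set P : X →L[ℂ] X := Vᗮ.subtypeL.comp (Vᗮ.orthogonalProjectionOnto) with hP
  -- key step: for every `c > 0` there is `h ∈ Vᗮ` with `‖B h‖ < c * ‖A h‖`
  have key : ∀ c : ℝ, 0 < c → ∃ h, h ∈ Vᗮ ∧ ‖B h‖ < c * ‖A h‖ := by
    intro c hc
    by_contra hcon
    push_neg at hcon
    have hcon' : ∀ h ∈ Vᗮ, c * ‖A h‖ ≤ ‖B h‖ := fun h hh => hcon h hh
    have hbd : ∀ x, ‖(A.comp P) x‖ ≤ c⁻¹ * ‖(B.comp P) x‖ := by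
      intro x
      have hmem : P x ∈ Vᗮ := (Vᗮ.orthogonalProjectionOnto x).2
      have h1 : c * ‖A (P x)‖ ≤ ‖B (P x)‖ := hcon' (P x) hmem
      have h2 : ‖A (P x)‖ = c⁻¹ * (c * ‖A (P x)‖) := by
        field_simp
      calc ‖(A.comp P) x‖ = c⁻¹ * (c * ‖A (P x)‖) := h2
        _ ≤ c⁻¹ * ‖B (P x)‖ := by
            exact mul_le_mul_of_nonneg_left h1 (by positivity)
        _ = c⁻¹ * ‖(B.comp P) x‖ := rfl
    have hrange := douglas_range_le (A.comp P) (B.comp P) c⁻¹ hbd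
    have hPadj : adjoint P = P := (isSelfAdjoint_starProjection Vᗮ).adjoint_eq
    have hc1 : adjoint (A.comp P) = P.comp (adjoint A) := by
      rw [adjoint_comp, hPadj]
    have hc2 : adjoint (B.comp P) = P.comp (adjoint B) := by
      rw [adjoint_comp, hPadj]
    rw [hc1, hc2] at hrange
    -- from `range (P ∘ A*) ≤ range (P ∘ B*)` deduce `range A* ≤ range B* ⊔ V`
    have hkerP : ∀ x : X, P x = 0 → x ∈ V := by
      intro x hx
      have h0 : Vᗮ.orthogonalProjectionOnto x = 0 := by
        apply Subtype.ext
        simpa [hP] using hx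
      have := Submodule.orthogonalProjectionOnto_eq_zero_iff.mp h0
      rwa [Submodule.orthogonal_orthogonal] at this
    have hsub : LinearMap.range (adjoint A : Y →ₗ[ℂ] X) ≤ LinearMap.range (adjoint B : Z →ₗ[ℂ] X) ⊔ V := by
      rintro _ ⟨y, rfl⟩
      obtain ⟨w, hw⟩ := hrange (LinearMap.mem_range_self (P.comp (adjoint A) : Y →ₗ[ℂ] X) y)
      have hw' : P (adjoint B w) = P (adjoint A y) := hw
      have hv : adjoint A y - adjoint B w ∈ V := by
        apply hkerP
        rw [map_sub, hw', sub_self]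
      have hdecomp : adjoint A y = adjoint B w + (adjoint A y - adjoint B w) := by abel
      change adjoint A y ∈ _
      rw [hdecomp]
      exact Submodule.add_mem_sup (LinearMap.mem_range_self _ w) hv
    -- contradiction with infinite-dimensionality
    set RA : Submodule ℂ X := LinearMap.range (adjoint A : Y →ₗ[ℂ] X) with hRA
    set RB : Submodule ℂ X := LinearMap.range (adjoint B : Z →ₗ[ℂ] X) with hRB
    set f : RA →ₗ[ℂ] X ⧸ RB := RB.mkQ.comp RA.subtype with hfdef
    have hinj : Function.Injective f := by
      intro a b hab
      apply Subtype.ext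
      have h1 : RB.mkQ (a : X) = RB.mkQ (b : X) := hab
      have h2 : (a : X) - (b : X) ∈ RB :=
        (Submodule.Quotient.eq RB).mp (by simpa [Submodule.mkQ_apply] using h1)
      have h3 : (a : X) - (b : X) ∈ RA := sub_mem a.2 b.2
      have h4 : (a : X) - (b : X) ∈ RA ⊓ RB := ⟨h3, h2⟩
      rw [hint] at h4
      exact sub_eq_zero.mp ((Submodule.mem_bot ℂ).mp h4)
    have hle : ∀ a : RA, f a ∈ V.map RB.mkQ := by
      intro a
      obtain ⟨b, hb, v, hv, hbv⟩ := Submodule.mem_sup.mp (hsub a.2)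
      refine ⟨v, hv, ?_⟩
      have hfb : RB.mkQ b = 0 := (Submodule.Quotient.mk_eq_zero RB).mpr hb
      show RB.mkQ v = RB.mkQ (a : X)
      rw [← hbv, map_add, hfb, zero_add]
    haveI : FiniteDimensional ℂ (V.map RB.mkQ) := inferInstance
    set f' : RA →ₗ[ℂ] V.map RB.mkQ := f.codRestrict (V.map RB.mkQ) hle with hf'
    have hinj' : Function.Injective f' := by
      intro a b hab
      apply hinj
      exact Subtype.ext_iff.mp hab
    exact hinf (FiniteDimensional.of_injective f' hinj')
  -- construct the sequence
  have key2 : ∀ n : ℕ, ∃ h, h ∈ Vᗮ ∧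
      ‖A h‖ = (n : ℝ) ∧ ‖B h‖ ≤ (n : ℝ) / ((n : ℝ) + 1) ^ 2 := by
    intro n
    obtain ⟨g, hgmem, hglt⟩ := key (1 / ((n : ℝ) + 1) ^ 2) (by positivity)
    have hAg : 0 < ‖A g‖ := by
      by_contra hA0
      push_neg at hA0
      have : ‖A g‖ = 0 := le_antisymm hA0 (norm_nonneg _)
      rw [this, mul_zero] at hglt
      exact absurd hglt (not_lt.mpr (norm_nonneg _))
    set r : ℝ := (n : ℝ) / ‖A g‖ with hr
    have hr0 : 0 ≤ r := by positivity
    refine ⟨(r : ℂ) • g, Vᗮ.smul_mem _ hgmem, ?_, ?_⟩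
    · rw [map_smul, norm_smul, Complex.norm_real, Real.norm_eq_abs, abs_of_nonneg hr0, hr,
        div_mul_cancel₀ _ (ne_of_gt hAg)]
    · rw [map_smul, norm_smul, Complex.norm_real, Real.norm_eq_abs, abs_of_nonneg hr0]
      calc r * ‖B g‖ ≤ r * (1 / ((n : ℝ) + 1) ^ 2 * ‖A g‖) :=
            mul_le_mul_of_nonneg_left (le_of_lt hglt) hr0
        _ = (n : ℝ) / ((n : ℝ) + 1) ^ 2 := by
            rw [hr]; field_simp
  choose h hmem hA hB using key2
  refine ⟨h, hmem, ?_, ?_⟩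
  · have : (fun n => ‖A (h n)‖) = fun n : ℕ => (n : ℝ) := funext hA
    rw [this]
    exact tendsto_natCast_atTop_atTop
  · have hbd : ∀ n : ℕ, ‖B (h n)‖ ≤ 1 / ((n : ℝ) + 1) := by
      intro n
      refine le_trans (hB n) ?_
      rw [div_le_div_iff₀ (by positivity) (by positivity)]
      nlinarith [Nat.cast_nonneg (α := ℝ) n]
    exact squeeze_zero (fun n => norm_nonneg _) hbd
      tendsto_one_div_add_atTop_nhds_zero_nat
end

section
/- Let X and H be complex Hilbert spaces, let B : X → H be a bounded linear operator, let S : H → H be a bounded self-adjoint linear operator that is coercive, i.e. there exists c₀ > 0 with ⟨S v, v⟩ ≥ c₀ ‖v‖² for all v ∈ H, and let K : H → H be a compact self-adjoint bounded linear operator. Then there exists a finite-dimensional subspace V ⊆ X such that ⟨(S + K)(B g), B g⟩ ≥ 0 for all g in the orthogonal complement V⊥ of V. -/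
open scoped InnerProductSpace

/-- For a compact operator `K` on a complex Hilbert space and `ε > 0`, there is a
finite-dimensional subspace `W` such that `Re ⟪K v, v⟫ ≥ -ε ‖v‖²` on `Wᗮ`. -/
lemma aux_compact_almost_nonneg {H : Type*}
    [NormedAddCommGroup H] [InnerProductSpace ℂ H] [CompleteSpace H]
    (K : H →L[ℂ] H) (hKc : IsCompactOperator K) (ε : ℝ) (hε : 0 < ε) :
    ∃ W : Submodule ℂ H, FiniteDimensional ℂ ↥W ∧
      ∀ v ∈ Wᗮ, -(ε * ‖v‖ ^ 2) ≤ (⟪K v, v⟫_ℂ).re := by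
  by_contra hcon
  push_neg at hcon
  -- choice of a unit "bad" vector orthogonal to any finite-dimensional subspace
  have hbad : ∀ W : Submodule ℂ H, ∃ u : H, FiniteDimensional ℂ ↥W →
      (‖u‖ = 1 ∧ u ∈ Wᗮ ∧ (⟪K u, u⟫_ℂ).re < -ε) := by
    intro W
    by_cases hW : FiniteDimensional ℂ ↥W
    · obtain ⟨v, hvW, hv⟩ := hcon W hW
      have hv0 : v ≠ 0 := by
        rintro rfl
        simp at hv
      have hnv : (0 : ℝ) < ‖v‖ := norm_pos_iff.mpr hv0
      refine ⟨((‖v‖⁻¹ : ℝ) : ℂ) • v, fun _ => ⟨?_, ?_, ?_⟩⟩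
      · rw [norm_smul]
        simp [hnv.ne']
      · exact Wᗮ.smul_mem _ hvW
      · have h1 : ⟪K (((‖v‖⁻¹ : ℝ) : ℂ) • v), ((‖v‖⁻¹ : ℝ) : ℂ) • v⟫_ℂ
            = ((‖v‖⁻¹ * ‖v‖⁻¹ : ℝ) : ℂ) * ⟪K v, v⟫_ℂ := by
          rw [map_smul, inner_smul_left, inner_smul_right, Complex.conj_ofReal]
          push_cast
          ring
        rw [h1, Complex.re_ofReal_mul]
        have h3 : (0 : ℝ) < ‖v‖⁻¹ * ‖v‖⁻¹ := by positivity
        have hvv : ‖v‖⁻¹ * ‖v‖ = 1 := inv_mul_cancel₀ hnv.ne'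
        calc ‖v‖⁻¹ * ‖v‖⁻¹ * (⟪K v, v⟫_ℂ).re
            < ‖v‖⁻¹ * ‖v‖⁻¹ * (-(ε * ‖v‖ ^ 2)) := (mul_lt_mul_iff_right₀ h3).mpr hv
          _ = -(ε * (‖v‖⁻¹ * ‖v‖) ^ 2) := by ring
          _ = -ε := by rw [hvv]; ring
    · exact ⟨0, fun h => absurd h hW⟩
  choose pick hpick using hbad
  -- the increasing sequence of subspaces and orthonormal bad vectors
  let W : ℕ → Submodule ℂ H := fun n => Nat.rec (motive := fun _ => Submodule ℂ H) ⊥ (fun _ Wn => Wn ⊔ (ℂ ∙ pick Wn)) n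
  have hWsucc : ∀ n, W (n + 1) = W n ⊔ (ℂ ∙ pick (W n)) := fun n => rfl
  have hfd : ∀ n, FiniteDimensional ℂ ↥(W n) := by
    intro n
    induction n with
    | zero => exact inferInstanceAs (FiniteDimensional ℂ ↥(⊥ : Submodule ℂ H))
    | succ n ih =>
      haveI := ih
      exact inferInstanceAs (FiniteDimensional ℂ ↥(W n ⊔ (ℂ ∙ pick (W n))))
  set v : ℕ → H := fun n => pick (W n) with hv
  have hVprop : ∀ n, ‖v n‖ = 1 ∧ v n ∈ (W n)ᗮ ∧ (⟪K (v n), v n⟫_ℂ).re < -ε :=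
    fun n => hpick (W n) (hfd n)
  have hmono : Monotone W := by
    apply monotone_nat_of_le_succ
    intro n
    rw [hWsucc]
    exact le_sup_left
  have hmem : ∀ m n, m < n → v m ∈ W n := by
    intro m n hmn
    have h1 : v m ∈ W (m + 1) := by
      rw [hWsucc]
      exact Submodule.mem_sup_right (Submodule.mem_span_singleton_self _)
    exact hmono hmn h1
  have hkey0 : ∀ a b, a < b → ⟪v a, v b⟫_ℂ = 0 := by
    intro a b hab
    have h := (hVprop b).2.1
    rw [Submodule.mem_orthogonal] at h
    exact h (v a) (hmem a b hab)
  have horth : Orthonormal ℂ v := by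
    constructor
    · exact fun n => (hVprop n).1
    · intro i j hij
      rcases lt_or_gt_of_ne hij with h | h
      · exact hkey0 i j h
      · rw [← inner_conj_symm, hkey0 j i h, map_zero]
  -- compactness: extract convergent subsequence of `K ∘ v`
  obtain ⟨C, hC, hCsub⟩ := hKc.image_closedBall_subset_compact (1 : ℝ)
  have hKvC : ∀ n, K (v n) ∈ C := by
    intro n
    exact hCsub ⟨v n, by simp [Metric.mem_closedBall, dist_zero_right, (hVprop n).1], rfl⟩
  obtain ⟨y, _, φ, hφ, hconv⟩ := hC.tendsto_subseq hKvC
  -- Bessel: inner products with `y` tend to zero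
  have hsum : Summable fun n => ‖⟪v n, y⟫_ℂ‖ ^ 2 := horth.inner_products_summable y
  have htend0 : Filter.Tendsto (fun n => ‖⟪v n, y⟫_ℂ‖ ^ 2) Filter.atTop (nhds 0) :=
    hsum.tendsto_atTop_zero
  have htend : Filter.Tendsto (fun n => ‖⟪v n, y⟫_ℂ‖) Filter.atTop (nhds 0) := by
    have h2 := (Real.continuous_sqrt.tendsto 0).comp htend0
    simp only [Real.sqrt_zero] at h2
    have h3 : (fun n => ‖⟪v n, y⟫_ℂ‖) = (Real.sqrt ∘ fun n => ‖⟪v n, y⟫_ℂ‖ ^ 2) := by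
      funext n; simp [Real.sqrt_sq (norm_nonneg _)]
    rw [h3]; exact h2
  -- lower bound: ε ≤ ‖K v n - y‖ + ‖⟪v n, y⟫‖
  have hkey : ∀ n, ε ≤ ‖K (v n) - y‖ + ‖⟪v n, y⟫_ℂ‖ := by
    intro n
    have h1 : ⟪K (v n), v n⟫_ℂ = ⟪K (v n) - y, v n⟫_ℂ + ⟪y, v n⟫_ℂ := by
      rw [← inner_add_left, sub_add_cancel]
    have h2 : |(⟪K (v n) - y, v n⟫_ℂ).re| ≤ ‖K (v n) - y‖ := by
      calc |(⟪K (v n) - y, v n⟫_ℂ).re| ≤ ‖⟪K (v n) - y, v n⟫_ℂ‖ := Complex.abs_re_le_norm _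
        _ ≤ ‖K (v n) - y‖ * ‖v n‖ := norm_inner_le_norm _ _
        _ = ‖K (v n) - y‖ := by rw [(hVprop n).1, mul_one]
    have h3 : |(⟪y, v n⟫_ℂ).re| ≤ ‖⟪v n, y⟫_ℂ‖ := by
      calc |(⟪y, v n⟫_ℂ).re| ≤ ‖⟪y, v n⟫_ℂ‖ := Complex.abs_re_le_norm _
        _ = ‖⟪v n, y⟫_ℂ‖ := norm_inner_symm _ _
    have h4 := (hVprop n).2.2
    rw [h1] at h4
    simp only [Complex.add_re] at h4
    nlinarith [abs_le.mp h2, abs_le.mp h3]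
  -- contradiction: the RHS tends to 0 along the subsequence
  have hrhs : Filter.Tendsto (fun k => ‖K (v (φ k)) - y‖ + ‖⟪v (φ k), y⟫_ℂ‖)
      Filter.atTop (nhds 0) := by
    have h1 : Filter.Tendsto (fun k => ‖K (v (φ k)) - y‖) Filter.atTop (nhds 0) := by
      have := tendsto_iff_norm_sub_tendsto_zero.mp hconv
      simpa [Function.comp] using this
    have h2 : Filter.Tendsto (fun k => ‖⟪v (φ k), y⟫_ℂ‖) Filter.atTop (nhds 0) :=
      htend.comp hφ.tendsto_atTop
    simpa using h1.add h2
  obtain ⟨k, hk⟩ := (hrhs.eventually (eventually_lt_nhds hε)).exists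
  exact absurd (hkey (φ k)) (not_le.mpr hk)

/-- **Theorem 4.5, part (1) (abstract form).**  Let `X`, `H` be complex Hilbert spaces,
`B : X → H` a bounded linear operator, `S : H → H` a bounded self-adjoint coercive
operator (i.e. `⟨S v, v⟩ ≥ c₀ ‖v‖²` for some `c₀ > 0` and all `v`) and `K : H → H` a
compact self-adjoint bounded linear operator.  Then there is a finite-dimensional
subspace `V ⊆ X` with `⟨(S + K) (B g), B g⟩ ≥ 0` for all `g ∈ Vᗮ`. -/
theorem stmt_10 {X H : Type*}
    [NormedAddCommGroup X] [InnerProductSpace ℂ X] [CompleteSpace X]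
    [NormedAddCommGroup H] [InnerProductSpace ℂ H] [CompleteSpace H]
    (B : X →L[ℂ] H)
    (S : H →L[ℂ] H) (hSs : IsSelfAdjoint S)
    (c₀ : ℝ) (hc₀ : 0 < c₀) (hcoer : ∀ v : H, c₀ * ‖v‖ ^ 2 ≤ (⟪S v, v⟫_ℂ).re)
    (K : H →L[ℂ] H) (hKc : IsCompactOperator K) (hKs : IsSelfAdjoint K) :
    ∃ V : Submodule ℂ X, FiniteDimensional ℂ ↥V ∧
      ∀ g ∈ Vᗮ, 0 ≤ (⟪(S + K) (B g), B g⟫_ℂ).re := by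
  obtain ⟨W, hWfd, hW⟩ := aux_compact_almost_nonneg K hKc c₀ hc₀
  refine ⟨W.map (ContinuousLinearMap.adjoint B).toLinearMap, ?_, ?_⟩
  · haveI := hWfd
    exact Module.Finite.map W _
  · intro g hg
    have hBg : B g ∈ Wᗮ := by
      rw [Submodule.mem_orthogonal]
      intro w hw
      have h1 : ⟪(ContinuousLinearMap.adjoint B) w, g⟫_ℂ = 0 :=
        hg _ (Submodule.mem_map_of_mem hw)
      rwa [ContinuousLinearMap.adjoint_inner_left] at h1
    have h2 := hW (B g) hBg
    have h3 := hcoer (B g)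
    have h4 : ⟪(S + K) (B g), B g⟫_ℂ = ⟪S (B g), B g⟫_ℂ + ⟪K (B g), B g⟫_ℂ := by
      simp [inner_add_left]
    rw [h4, Complex.add_re]
    linarith
end

section
/- Let X and H be complex Hilbert spaces, let B : X → H be a compact bounded linear operator, let S : H → H be a bounded self-adjoint linear operator that is coercive, i.e. there exists c₀ > 0 with ⟨S v, v⟩ ≥ c₀ ‖v‖² for all v ∈ H, and let K : H → H be a compact self-adjoint bounded linear operator. Then T := B*(S + K)B is a compact self-adjoint bounded linear operator on X, and the subspace of X spanned by all eigenvectors of T corresponding to negative eigenvalues is finite-dimensional. -/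
open ContinuousLinearMap
open scoped InnerProductSpace

/-- A subspace on which a compact operator is bounded below is finite-dimensional. -/
lemma aux_findim {H : Type*} [NormedAddCommGroup H] [InnerProductSpace ℂ H] [CompleteSpace H]
    (K : H →L[ℂ] H) (hKc : IsCompactOperator K) {c₀ : ℝ} (hc₀ : 0 < c₀)
    (W : Submodule ℂ H) (hW : ∀ w ∈ W, c₀ * ‖w‖ ≤ ‖K w‖) :
    FiniteDimensional ℂ ↥W := by
  set Wc := W.topologicalClosure with hWcdef
  have hWc : ∀ w ∈ Wc, c₀ * ‖w‖ ≤ ‖K w‖ := by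
    have hcl : IsClosed {w : H | c₀ * ‖w‖ ≤ ‖K w‖} :=
      isClosed_le (continuous_const.mul continuous_norm) (K.continuous.norm)
    intro w hw
    exact closure_minimal hW hcl hw
  haveI : CompleteSpace ↥Wc := W.isClosed_topologicalClosure.completeSpace_coe
  set f : ↥Wc →L[ℂ] H := K.comp Wc.subtypeL with hfdef
  have hfc : IsCompactOperator ⇑f := hKc.comp_clm Wc.subtypeL
  have hanti : AntilipschitzWith (⟨c₀, hc₀.le⟩ : NNReal)⁻¹ ⇑f := by
    refine antilipschitzWith_iff_le_mul_dist.mpr fun x y => ?_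
    have hxy : ((x : H) - (y : H)) ∈ Wc := Wc.sub_mem x.2 y.2
    have h1 := hWc _ hxy
    have hd1 : dist x y = ‖(x : H) - (y : H)‖ := by
      rw [Subtype.dist_eq, dist_eq_norm]
    have hd2 : dist (f x) (f y) = ‖K ((x : H) - (y : H))‖ := by
      rw [dist_eq_norm, hfdef]
      simp [map_sub]
    rw [hd1, hd2]
    change _ ≤ c₀⁻¹ * _
    have h2 := mul_le_mul_of_nonneg_left h1 (inv_nonneg.mpr hc₀.le)
    rw [inv_mul_cancel_left₀ hc₀.ne'] at h2
    simpa using h2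
  have hUI : IsUniformInducing ⇑f :=
    (hanti.isUniformEmbedding f.uniformContinuous).toIsUniformInducing
  obtain ⟨M, hM, hsub⟩ :=
    IsCompactOperator.image_closedBall_subset_compact (f := (f : ↥Wc →ₗ[ℂ] H)) hfc 1
  have htb : TotallyBounded (Metric.closedBall (0 : ↥Wc) 1) := by
    rw [← totallyBounded_image_iff hUI]
    exact hM.totallyBounded.subset hsub
  have hcpt : IsCompact (Metric.closedBall (0 : ↥Wc) 1) :=
    TotallyBounded.isCompact_of_isClosed htb Metric.isClosed_closedBall
  haveI : FiniteDimensional ℂ ↥Wc := .of_isCompact_closedBall₀ ℂ one_pos hcpt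
  exact FiniteDimensional.of_injective (Submodule.inclusion W.le_topologicalClosure)
    (Submodule.inclusion_injective _)

/-- On the span of eigenvectors with negative eigenvalues, the quadratic form of a
self-adjoint operator is negative definite. -/
lemma aux_neg {X : Type*} [NormedAddCommGroup X] [InnerProductSpace ℂ X]
    (T : X →L[ℂ] X) (hT : (↑T : X →ₗ[ℂ] X).IsSymmetric) {x : X}
    (hx : x ∈ ⨆ (μ : ℝ) (_ : μ < 0),
        Module.End.eigenspace (↑T : X →ₗ[ℂ] X) (μ : ℂ))
    (hx0 : x ≠ 0) : (⟪T x, x⟫_ℂ).re < 0 := by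
  classical
  rw [iSup_subtype'] at hx
  obtain ⟨g, hg, hsum⟩ := (Submodule.mem_iSup_iff_exists_finsupp _ _).mp hx
  have hxsum : x = ∑ i ∈ g.support, g i := by rw [← hsum]; rfl
  have hTg : ∀ i : {μ : ℝ // μ < 0}, T (g i) = ((i : ℝ) : ℂ) • g i := fun i =>
    Module.End.mem_eigenspace_iff.mp (hg i)
  have horth : ∀ i j : {μ : ℝ // μ < 0}, i ≠ j → ⟪g i, g j⟫_ℂ = 0 := by
    intro i j hij
    have hne : (((i : ℝ) : ℂ)) ≠ (((j : ℝ) : ℂ)) := by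
      simp only [ne_eq, Complex.ofReal_inj]
      exact fun h => hij (Subtype.ext h)
    exact hT.orthogonalFamily_eigenspaces hne ⟨g i, hg i⟩ ⟨g j, hg j⟩
  have key : ⟪T x, x⟫_ℂ = ∑ i ∈ g.support, (((i : ℝ) : ℂ) * (‖g i‖ : ℂ) ^ 2) := by
    conv_lhs => rw [hxsum]
    have hmap : T (∑ i ∈ g.support, g i) = ∑ i ∈ g.support, T (g i) :=
      map_sum T (fun i => g i) g.support
    rw [hmap, sum_inner]
    refine Finset.sum_congr rfl fun i hi => ?_
    rw [inner_sum, Finset.sum_eq_single i]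
    · rw [hTg i, inner_smul_left, Complex.conj_ofReal, inner_self_eq_norm_sq_to_K]
      rfl
    · intro j hj hji
      rw [hTg i, inner_smul_left, horth i j (fun h => hji (h ▸ rfl)), mul_zero]
    · intro h; exact absurd hi h
  have hre : (⟪T x, x⟫_ℂ).re = ∑ i ∈ g.support, (i : ℝ) * ‖g i‖ ^ 2 := by
    rw [key, Complex.re_sum]
    refine Finset.sum_congr rfl fun i _ => ?_
    rw [← Complex.ofReal_pow, ← Complex.ofReal_mul, Complex.ofReal_re]
  rw [hre]
  have hne : g.support.Nonempty := by
    rcases Finset.eq_empty_or_nonempty g.support with h | h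
    · exfalso; apply hx0; rw [hxsum, h, Finset.sum_empty]
    · exact h
  have hlt : ∀ i ∈ g.support, (i : ℝ) * ‖g i‖ ^ 2 < 0 := by
    intro i hi
    have hgi : g i ≠ 0 := Finsupp.mem_support_iff.mp hi
    exact mul_neg_of_neg_of_pos i.2 (pow_pos (norm_pos_iff.mpr hgi) 2)
  calc ∑ i ∈ g.support, (i : ℝ) * ‖g i‖ ^ 2
      < ∑ _i ∈ g.support, (0 : ℝ) := Finset.sum_lt_sum_of_nonempty hne hlt
    _ = 0 := by simp

/-- Let `X`, `H` be complex Hilbert spaces, `B : X → H` a compact bounded linear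
operator, `S : H → H` a bounded self-adjoint coercive operator and `K : H → H` a compact
self-adjoint bounded linear operator.  Then `T := B* (S + K) B` is a compact self-adjoint
bounded linear operator on `X`, and the span of all eigenvectors of `T` corresponding to
negative eigenvalues is finite-dimensional. -/
theorem stmt_11 {X H : Type*}
    [NormedAddCommGroup X] [InnerProductSpace ℂ X] [CompleteSpace X]
    [NormedAddCommGroup H] [InnerProductSpace ℂ H] [CompleteSpace H]
    (B : X →L[ℂ] H) (hBc : IsCompactOperator B)
    (S : H →L[ℂ] H) (hSs : IsSelfAdjoint S)
    (c₀ : ℝ) (hc₀ : 0 < c₀) (hcoer : ∀ v : H, c₀ * ‖v‖ ^ 2 ≤ (⟪S v, v⟫_ℂ).re)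
    (K : H →L[ℂ] H) (hKc : IsCompactOperator K) (hKs : IsSelfAdjoint K) :
    IsCompactOperator (adjoint B ∘L (S + K) ∘L B) ∧
      IsSelfAdjoint (adjoint B ∘L (S + K) ∘L B) ∧
      FiniteDimensional ℂ
        ↥(⨆ (μ : ℝ) (_ : μ < 0),
            Module.End.eigenspace
              ((adjoint B ∘L (S + K) ∘L B : X →L[ℂ] X) : X →ₗ[ℂ] X) (μ : ℂ)) := by
  have hAs : IsSelfAdjoint (S + K) := hSs.add hKs
  have hTs : IsSelfAdjoint (adjoint B ∘L (S + K) ∘L B) := hAs.adjoint_conj B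
  have hTc : IsCompactOperator ⇑(adjoint B ∘L (S + K) ∘L B) :=
    hBc.clm_comp (adjoint B ∘L (S + K))
  refine ⟨hTc, hTs, ?_⟩
  set T := adjoint B ∘L (S + K) ∘L B with hTdef
  have hTinner : ∀ x : X, ⟪T x, x⟫_ℂ = ⟪(S + K) (B x), B x⟫_ℂ := fun x => by
    rw [hTdef]
    simp [ContinuousLinearMap.comp_apply, ContinuousLinearMap.adjoint_inner_left, inner_add_left]
  set V := ⨆ (μ : ℝ) (_ : μ < 0),
      Module.End.eigenspace (↑T : X →ₗ[ℂ] X) (μ : ℂ) with hVdef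
  have hVneg : ∀ x ∈ V, x ≠ 0 → (⟪(S + K) (B x), B x⟫_ℂ).re < 0 := by
    intro x hx hx0
    rw [← hTinner]
    exact aux_neg T hTs.isSymmetric hx hx0
  have hstep : ∀ x ∈ V, x ≠ 0 → c₀ * ‖B x‖ ^ 2 < ‖K (B x)‖ * ‖B x‖ := by
    intro x hx hx0
    have h1 := hVneg x hx hx0
    have h2 : (⟪S (B x), B x⟫_ℂ).re + (⟪K (B x), B x⟫_ℂ).re < 0 := by
      simpa [ContinuousLinearMap.add_apply, inner_add_left] using h1
    have h3 := hcoer (B x)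
    have h4 : -(⟪K (B x), B x⟫_ℂ).re ≤ ‖K (B x)‖ * ‖B x‖ := by
      have h5 : ‖⟪K (B x), B x⟫_ℂ‖ ≤ ‖K (B x)‖ * ‖B x‖ := norm_inner_le_norm _ _
      have h6 : |(⟪K (B x), B x⟫_ℂ).re| ≤ ‖⟪K (B x), B x⟫_ℂ‖ := Complex.abs_re_le_norm _
      have h7 := neg_abs_le (⟪K (B x), B x⟫_ℂ).re
      linarith
    linarith
  have hBinj : ∀ x ∈ V, B x = 0 → x = 0 := by
    intro x hx hBx
    by_contra h
    have := hstep x hx h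
    rw [hBx] at this
    simp at this
  have hW : ∀ w ∈ V.map (B : X →ₗ[ℂ] H), c₀ * ‖w‖ ≤ ‖K w‖ := by
    rintro w ⟨x, hx, rfl⟩
    rcases eq_or_ne x 0 with rfl | hx0
    · simp
    · have h := hstep x hx hx0
      have hBx : B x ≠ 0 := fun h0 => hx0 (hBinj x hx h0)
      have hn : 0 < ‖B x‖ := norm_pos_iff.mpr hBx
      have : c₀ * ‖B x‖ ≤ ‖K (B x)‖ := by nlinarith
      simpa using this
  haveI hWfd : FiniteDimensional ℂ ↥(V.map (B : X →ₗ[ℂ] H)) := aux_findim K hKc hc₀ _ hW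
  have hres : ∀ x ∈ V, (B : X →ₗ[ℂ] H) x ∈ V.map (B : X →ₗ[ℂ] H) := fun x hx =>
    Submodule.mem_map_of_mem hx
  refine FiniteDimensional.of_injective ((B : X →ₗ[ℂ] H).restrict hres) ?_
  intro a b hab
  have hab' : B ((a : X) - (b : X)) = 0 := by
    have : (B : X →ₗ[ℂ] H) (a : X) = (B : X →ₗ[ℂ] H) (b : X) := by
      have := congrArg Subtype.val hab
      simpa [LinearMap.restrict_apply] using this
    simp only [ContinuousLinearMap.coe_coe] at this
    rw [map_sub, this, sub_self]
  have hmem : ((a : X) - (b : X)) ∈ V := V.sub_mem a.2 b.2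
  have := hBinj _ hmem hab'
  exact Subtype.ext (sub_eq_zero.mp this)
end

section
/- Let X, Y, Z be complex Hilbert spaces and let A : X → Y and B : X → Z be bounded linear operators such that range(A*) is infinite-dimensional and range(A*) ∩ range(B*) = {0}, and let c′ > 0 be a constant. Then for every finite-dimensional subspace V₁ ⊆ X there exists g in the orthogonal complement V₁⊥ such that ‖A g‖² > c′ ‖B g‖². In particular, there is no finite-dimensional subspace V₁ ⊆ X with ‖A g‖² ≤ c′ ‖B g‖² for all g ∈ V₁⊥. -/
open ContinuousLinearMap
open scoped InnerProductSpace

lemma douglas_step {X Y Z : Type*}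
    [NormedAddCommGroup X] [InnerProductSpace ℂ X] [CompleteSpace X]
    [NormedAddCommGroup Y] [InnerProductSpace ℂ Y] [CompleteSpace Y]
    [NormedAddCommGroup Z] [InnerProductSpace ℂ Z] [CompleteSpace Z]
    (T : X →L[ℂ] Y) (S : X →L[ℂ] Z) (c : ℝ) (hc : 0 ≤ c)
    (h : ∀ g, ‖T g‖ ≤ c * ‖S g‖) (y : Y) :
    ∃ z : Z, adjoint T y = adjoint S z := by
  classical
  set ψ : X →L[ℂ] ℂ := (innerSL ℂ y).comp T with hψ
  have hker : LinearMap.ker (S : X →ₗ[ℂ] Z) ≤ LinearMap.ker (ψ : X →ₗ[ℂ] ℂ) := by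
    intro g hg
    have hg' : S g = 0 := hg
    have h1 : ‖T g‖ ≤ 0 := by simpa [hg'] using h g
    have hT : T g = 0 := norm_le_zero_iff.mp h1
    simp [LinearMap.mem_ker, hψ, hT]
  set e := LinearMap.quotKerEquivRange (S : X →ₗ[ℂ] Z) with he
  set ℓ : ↥(LinearMap.range (S : X →ₗ[ℂ] Z)) →ₗ[ℂ] ℂ :=
    (LinearMap.ker (S : X →ₗ[ℂ] Z)).liftQ (ψ : X →ₗ[ℂ] ℂ) hker ∘ₗ e.symm.toLinearMap with hℓ
  have hℓval : ∀ (g : X) (hg : (S : X →ₗ[ℂ] Z) g ∈ LinearMap.range (S : X →ₗ[ℂ] Z)),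
      ℓ ⟨(S : X →ₗ[ℂ] Z) g, hg⟩ = ψ g := by
    intro g hg
    have h1 : e (Submodule.Quotient.mk g) = ⟨(S : X →ₗ[ℂ] Z) g, hg⟩ := by
      apply Subtype.ext
      simp [he, LinearMap.quotKerEquivRange]
    have h2 : e.symm ⟨(S : X →ₗ[ℂ] Z) g, hg⟩ = Submodule.Quotient.mk g := by
      rw [← h1]; exact e.symm_apply_apply _
    show ((LinearMap.ker (S : X →ₗ[ℂ] Z)).liftQ (ψ : X →ₗ[ℂ] ℂ) hker)
        (e.symm ⟨(S : X →ₗ[ℂ] Z) g, hg⟩) = ψ g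
    rw [h2, Submodule.liftQ_apply]
    rfl
  have hbound : ∀ w : ↥(LinearMap.range (S : X →ₗ[ℂ] Z)), ‖ℓ w‖ ≤ (c * ‖y‖) * ‖w‖ := by
    rintro ⟨w, g, rfl⟩
    show ‖ℓ ⟨(S : X →ₗ[ℂ] Z) g, LinearMap.mem_range_self _ g⟩‖ ≤ _
    rw [hℓval g _]
    have hnorm : ‖(⟨(S : X →ₗ[ℂ] Z) g, LinearMap.mem_range_self _ g⟩ :
        ↥(LinearMap.range (S : X →ₗ[ℂ] Z)))‖ = ‖S g‖ := rfl
    calc ‖ψ g‖ = ‖⟪y, T g⟫_ℂ‖ := by simp [hψ]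
      _ ≤ ‖y‖ * ‖T g‖ := norm_inner_le_norm _ _
      _ ≤ ‖y‖ * (c * ‖S g‖) := mul_le_mul_of_nonneg_left (h g) (norm_nonneg _)
      _ = (c * ‖y‖) * ‖S g‖ := by ring
  set ℓc : ↥(LinearMap.range (S : X →ₗ[ℂ] Z)) →L[ℂ] ℂ := ℓ.mkContinuous _ hbound with hℓc
  obtain ⟨φ, hφ, -⟩ := exists_extension_norm_eq (LinearMap.range (S : X →ₗ[ℂ] Z)) ℓc
  refine ⟨(InnerProductSpace.toDual ℂ Z).symm φ, ?_⟩
  apply ext_inner_right ℂ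
  intro g
  rw [adjoint_inner_left, adjoint_inner_left]
  have h2 : ⟪(InnerProductSpace.toDual ℂ Z).symm φ, S g⟫_ℂ = φ (S g) :=
    InnerProductSpace.toDual_symm_apply
  rw [h2]
  have h3 : φ (S g) = ℓc ⟨(S : X →ₗ[ℂ] Z) g, LinearMap.mem_range_self _ g⟩ :=
    hφ ⟨(S : X →ₗ[ℂ] Z) g, LinearMap.mem_range_self _ g⟩
  rw [h3]
  have h4 : ℓc ⟨(S : X →ₗ[ℂ] Z) g, LinearMap.mem_range_self _ g⟩ = ψ g :=
    hℓval g _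
  rw [h4]
  simp [hψ]

lemma core_contra {X Y Z : Type*}
    [NormedAddCommGroup X] [InnerProductSpace ℂ X] [CompleteSpace X]
    [NormedAddCommGroup Y] [InnerProductSpace ℂ Y] [CompleteSpace Y]
    [NormedAddCommGroup Z] [InnerProductSpace ℂ Z] [CompleteSpace Z]
    (A : X →L[ℂ] Y) (B : X →L[ℂ] Z)
    (hinf : ¬ FiniteDimensional ℂ ↥(LinearMap.range (adjoint A : Y →ₗ[ℂ] X)))
    (hint : LinearMap.range (adjoint A : Y →ₗ[ℂ] X) ⊓ LinearMap.range (adjoint B : Z →ₗ[ℂ] X) = ⊥)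
    (c' : ℝ) (hc' : 0 < c')
    (V₁ : Submodule ℂ X) (hV : FiniteDimensional ℂ ↥V₁)
    (hle : ∀ g ∈ V₁ᗮ, ‖A g‖ ^ 2 ≤ c' * ‖B g‖ ^ 2) : False := by
  classical
  haveI := hV
  haveI : CompleteSpace ↥V₁ := FiniteDimensional.complete ℂ ↥V₁
  set P : X →L[ℂ] X := V₁ᗮ.subtypeL.comp (V₁ᗮ.orthogonalProjectionOnto) with hP
  have hPmem : ∀ g, P g ∈ V₁ᗮ := fun g => (V₁ᗮ.orthogonalProjectionOnto g).2
  have hPadj : adjoint P = P := (isSelfAdjoint_starProjection V₁ᗮ)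
  set T := A.comp P with hT
  set S := B.comp P with hS
  have hkey : ∀ g, ‖T g‖ ≤ Real.sqrt c' * ‖S g‖ := by
    intro g
    have h1 := hle (P g) (hPmem g)
    have h2 : ‖A (P g)‖ ≤ Real.sqrt c' * ‖B (P g)‖ := by
      have := Real.sqrt_le_sqrt h1
      rwa [Real.sqrt_sq (norm_nonneg _), Real.sqrt_mul hc'.le,
        Real.sqrt_sq (norm_nonneg _)] at this
    simpa [hT, hS] using h2
  have hdoug : ∀ y : Y, ∃ z : Z, adjoint T y = adjoint S z :=
    douglas_step T S (Real.sqrt c') (Real.sqrt_nonneg _) hkey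
  have hTadj : adjoint T = P.comp (adjoint A) := by
    rw [hT, adjoint_comp, hPadj]
  have hSadj : adjoint S = P.comp (adjoint B) := by
    rw [hS, adjoint_comp, hPadj]
  have hVclosed : V₁ᗮᗮ = V₁ := Submodule.orthogonal_orthogonal V₁
  have hsubV : ∀ x : X, x - P x ∈ V₁ := by
    intro x
    have h0 := Submodule.sub_starProjection_mem_orthogonal (K := V₁ᗮ) x
    rw [hVclosed] at h0
    exact h0
  have hsub : LinearMap.range (adjoint A : Y →ₗ[ℂ] X) ≤ LinearMap.range (adjoint B : Z →ₗ[ℂ] X) ⊔ V₁ := by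
    rintro x ⟨y, rfl⟩
    obtain ⟨z, hz⟩ := hdoug y
    rw [hTadj, hSadj] at hz
    simp only [ContinuousLinearMap.comp_apply] at hz
    rw [Submodule.mem_sup]
    refine ⟨adjoint B z, LinearMap.mem_range_self _ z,
      (adjoint A y - P (adjoint A y)) - (adjoint B z - P (adjoint B z)), ?_, ?_⟩
    · exact Submodule.sub_mem _ (hsubV _) (hsubV _)
    · rw [hz]; abel
  apply hinf
  set q := (LinearMap.range (adjoint B : Z →ₗ[ℂ] X)).mkQ with hq
  set f : ↥(LinearMap.range (adjoint A : Y →ₗ[ℂ] X)) →ₗ[ℂ] X ⧸ LinearMap.range (adjoint B : Z →ₗ[ℂ] X) :=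
    q.comp (LinearMap.range (adjoint A : Y →ₗ[ℂ] X)).subtype with hf
  have hfinj : Function.Injective f := by
    rw [← LinearMap.ker_eq_bot, Submodule.eq_bot_iff]
    rintro ⟨x, hx⟩ hker
    have h1 : q x = 0 := hker
    have hxB : x ∈ LinearMap.range (adjoint B : Z →ₗ[ℂ] X) :=
      (Submodule.Quotient.mk_eq_zero _).mp h1
    have h2 : x ∈ LinearMap.range (adjoint A : Y →ₗ[ℂ] X) ⊓ LinearMap.range (adjoint B : Z →ₗ[ℂ] X) := ⟨hx, hxB⟩
    rw [hint] at h2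
    exact Subtype.ext h2
  have hfrange : ∀ x : ↥(LinearMap.range (adjoint A : Y →ₗ[ℂ] X)), f x ∈ V₁.map q := by
    rintro ⟨x, hx⟩
    obtain ⟨b, hb, v, hv, hbv⟩ := Submodule.mem_sup.mp (hsub hx)
    have hq0 : q b = 0 := (Submodule.Quotient.mk_eq_zero _).mpr hb
    have h3 : f ⟨x, hx⟩ = q v := by
      show q x = q v
      rw [← hbv]; simp [hq0]
    rw [h3]
    exact Submodule.mem_map_of_mem hv
  haveI : FiniteDimensional ℂ ↥(V₁.map q) := Module.Finite.map V₁ q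
  set f' : ↥(LinearMap.range (adjoint A : Y →ₗ[ℂ] X)) →ₗ[ℂ] ↥(V₁.map q) :=
    f.codRestrict (V₁.map q) hfrange with hf'
  have hf'inj : Function.Injective f' := by
    intro a b hab
    apply hfinj
    have := congrArg Subtype.val hab
    simpa [hf'] using this
  exact FiniteDimensional.of_injective f' hf'inj

/-- **Theorem 4.5, part (2) (abstract form).**  Let `A : X → Y`, `B : X → Z` be bounded
linear operators between complex Hilbert spaces with `range (A*)` infinite-dimensional
and `range (A*) ∩ range (B*) = {0}`, and let `c' > 0`.  Then for every finite-dimensional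
subspace `V₁ ⊆ X` there is a `g ∈ V₁ᗮ` with `‖A g‖² > c' ‖B g‖²`; in particular there is
no finite-dimensional subspace `V₁ ⊆ X` with `‖A g‖² ≤ c' ‖B g‖²` for all `g ∈ V₁ᗮ`. -/
theorem stmt_12 {X Y Z : Type*}
    [NormedAddCommGroup X] [InnerProductSpace ℂ X] [CompleteSpace X]
    [NormedAddCommGroup Y] [InnerProductSpace ℂ Y] [CompleteSpace Y]
    [NormedAddCommGroup Z] [InnerProductSpace ℂ Z] [CompleteSpace Z]
    (A : X →L[ℂ] Y) (B : X →L[ℂ] Z)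
    (hinf : ¬ FiniteDimensional ℂ ↥(LinearMap.range (adjoint A : Y →ₗ[ℂ] X)))
    (hint : LinearMap.range (adjoint A : Y →ₗ[ℂ] X) ⊓ LinearMap.range (adjoint B : Z →ₗ[ℂ] X) = ⊥)
    (c' : ℝ) (hc' : 0 < c') :
    (∀ V₁ : Submodule ℂ X, FiniteDimensional ℂ ↥V₁ →
        ∃ g ∈ V₁ᗮ, c' * ‖B g‖ ^ 2 < ‖A g‖ ^ 2) ∧
      ¬ ∃ V₁ : Submodule ℂ X, FiniteDimensional ℂ ↥V₁ ∧
          ∀ g ∈ V₁ᗮ, ‖A g‖ ^ 2 ≤ c' * ‖B g‖ ^ 2 := by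
  constructor
  · intro V₁ hV
    by_contra hcon
    push_neg at hcon
    exact core_contra A B hinf hint c' hc' V₁ hV hcon
  · rintro ⟨V₁, hV, hle⟩
    exact core_contra A B hinf hint c' hc' V₁ hV hle
end
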